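/- arXiv:1911.11874 — 4 statements merged into one kernel-verified Lean document; each statement's English description precedes it below -/
import Mathlib

section
/- Let Γ : Δ_M → Δ_M map the probability simplex on M types to itself. A reproductive fitness exists (i.e., a vector field φ : Δ_M → ℝ₊^M with Σ_{j ∈ C(x)} x(j)φ_j(x) > 0 and Γ_i(x) = x(i)φ_i(x) / Σ_j x(j)φ_j(x) for all i ∈ C(x)) if and only if the no-mutations condition Σ_{j ∈ C(x)} Γ_j(x) = 1 holds for all x ∈ Δ_M. -/
/-! Summing the defining identity over the support `C(x)` gives `∑_{j ∈ C(x)} Γ_j(x) = 1`, since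
the normalizing sum `∑ j, x j * φ_j(x)` only sees the support. Conversely, under the no-mutations
condition the fitness `φ_i(x) = Γ_i(x) / x_i` (on the support, `0` elsewhere) has mean fitness
`∑_{j ∈ C(x)} Γ_j(x) = 1`, so the defining identity holds without any normalization. -/

open Finset

/-- `φ` is a reproductive fitness for the update rule `Γ` on the simplex:
for every `x` in the simplex, `φ` is nonnegative, the average fitness
`∑ j, x j * φ x j` (which equals the sum over the support of `x`) is positive,
and `Γ_i(x) = x i * φ_i(x) / ∑ j, x j * φ_j(x)` for every `i` in the support of `x`. -/
def IsRepFitness {M : ℕ} (Γ φ : (Fin M → ℝ) → (Fin M → ℝ)) : Prop :=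
  ∀ x ∈ stdSimplex ℝ (Fin M),
    (∀ i, 0 ≤ φ x i) ∧ 0 < ∑ j, x j * φ x j ∧
      ∀ i, 0 < x i → Γ x i = x i * φ x i / ∑ j, x j * φ x j

section Support

variable {ι : Type*} {x : ι → ℝ}

noncomputable def fitnessOf (Γ : (ι → ℝ) → ι → ℝ) (x : ι → ℝ) (i : ι) : ℝ :=
  if 0 < x i then Γ x i / x i else 0

theorem mul_fitnessOf_of_pos (Γ : (ι → ℝ) → ι → ℝ) {i : ι} (hi : 0 < x i) :
    x i * fitnessOf Γ x i = Γ x i := by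
  rw [fitnessOf, if_pos hi, mul_div_cancel₀ _ hi.ne']

theorem fitnessOf_nonneg {Γ : (ι → ℝ) → ι → ℝ} (hΓ : 0 ≤ Γ x) (hx : 0 ≤ x) (i : ι) :
    0 ≤ fitnessOf Γ x i := by
  unfold fitnessOf
  split_ifs
  exacts [div_nonneg (hΓ i) (hx i), le_rfl]

variable [Fintype ι]

theorem sum_filter_pos_mul_eq_sum (hx : 0 ≤ x) (g : ι → ℝ) :
    ∑ j ∈ univ.filter (fun j => 0 < x j), x j * g j = ∑ j, x j * g j := by
  refine sum_filter_of_ne fun j _ hne => (hx j).lt_of_ne' ?_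
  rintro hxj
  simp [hxj] at hne

theorem sum_mul_fitnessOf (Γ : (ι → ℝ) → ι → ℝ) (hx : 0 ≤ x) :
    ∑ j, x j * fitnessOf Γ x j = ∑ j ∈ univ.filter (fun j => 0 < x j), Γ x j := by
  rw [← sum_filter_pos_mul_eq_sum hx]
  exact sum_congr rfl fun j hj => mul_fitnessOf_of_pos Γ (mem_filter.mp hj).2

end Support

variable {M : ℕ} {Γ : (Fin M → ℝ) → (Fin M → ℝ)}

theorem IsRepFitness.sum_support_eq_one {φ : (Fin M → ℝ) → (Fin M → ℝ)}
    (hφ : IsRepFitness Γ φ) {x : Fin M → ℝ} (hx : x ∈ stdSimplex ℝ (Fin M)) :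
    ∑ j ∈ univ.filter (fun j => 0 < x j), Γ x j = 1 := by
  obtain ⟨-, hpos, hΓφ⟩ := hφ x hx
  calc ∑ j ∈ univ.filter (fun j => 0 < x j), Γ x j
      = (∑ j ∈ univ.filter (fun j => 0 < x j), x j * φ x j) / ∑ j, x j * φ x j := by
        rw [sum_div]
        exact sum_congr rfl fun j hj => hΓφ j (mem_filter.mp hj).2
    _ = 1 := by rw [sum_filter_pos_mul_eq_sum hx.1, div_self hpos.ne']

theorem isRepFitness_fitnessOf (hΓ : ∀ x ∈ stdSimplex ℝ (Fin M), 0 ≤ Γ x)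
    (hmut : ∀ x ∈ stdSimplex ℝ (Fin M), ∑ j ∈ univ.filter (fun j => 0 < x j), Γ x j = 1) :
    IsRepFitness Γ (fitnessOf Γ) := by
  intro x hx
  have hmean : ∑ j, x j * fitnessOf Γ x j = 1 := by
    rw [sum_mul_fitnessOf Γ hx.1, hmut x hx]
  refine ⟨fitnessOf_nonneg (hΓ x hx) hx.1, hmean ▸ one_pos, fun i hi => ?_⟩
  rw [hmean, div_one, mul_fitnessOf_of_pos Γ hi]

/-- A reproductive fitness for `Γ` exists iff the no-mutations condition
`∑_{j ∈ C(x)} Γ_j(x) = 1` holds for all `x` in the simplex. -/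
theorem repFitness_exists_iff_noMutations {M : ℕ}
    (Γ : (Fin M → ℝ) → (Fin M → ℝ))
    (hΓ : ∀ x ∈ stdSimplex ℝ (Fin M), Γ x ∈ stdSimplex ℝ (Fin M)) :
    (∃ φ : (Fin M → ℝ) → (Fin M → ℝ), IsRepFitness Γ φ) ↔
      (∀ x ∈ stdSimplex ℝ (Fin M),
        ∑ j ∈ Finset.univ.filter (fun j => 0 < x j), Γ x j = 1) :=
  ⟨fun ⟨_, hφ⟩ _ hx => hφ.sum_support_eq_one hx,
    fun hmut => ⟨fitnessOf Γ, isRepFitness_fitnessOf (fun x hx => (hΓ x hx).1) hmut⟩⟩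
end

section
/- Suppose Γ : Δ_M → Δ_M satisfies the no-mutations condition Σ_{j ∈ C(x)} Γ_j(x) = 1 for all x. Then for any nonnegative function h : Δ_M → ℝ₊, any φ : Δ_M → ℝ₊^M satisfying φ_i(x) = (Γ_i(x)/x(i))·h(x) for all i ∈ C(x) with h(x) > 0 is a reproductive fitness for Γ; conversely, if φ is a reproductive fitness for Γ, then φ_i(x) = (Γ_i(x)/x(i))·h(x) holds for all i ∈ C(x) with h(x) = Σ_i x(i)φ_i(x). -/
open Finset

/-- Under the no-mutations condition: (a) any nonnegative `φ` with
`φ_i(x) = Γ_i(x)/x(i) · h(x)` on the support of `x` for a positive function `h`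
is a reproductive fitness; (b) conversely any reproductive fitness `φ` satisfies
this identity with `h(x) = ∑ i, x i * φ_i(x)`. -/
theorem repFitness_characterization {M : ℕ}
    (Γ : (Fin M → ℝ) → (Fin M → ℝ))
    (hΓ : ∀ x ∈ stdSimplex ℝ (Fin M), Γ x ∈ stdSimplex ℝ (Fin M))
    (hnm : ∀ x ∈ stdSimplex ℝ (Fin M),
      ∑ j ∈ Finset.univ.filter (fun j => 0 < x j), Γ x j = 1) :
    (∀ (h : (Fin M → ℝ) → ℝ) (φ : (Fin M → ℝ) → (Fin M → ℝ)),
        (∀ x ∈ stdSimplex ℝ (Fin M), 0 < h x) →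
        (∀ x ∈ stdSimplex ℝ (Fin M), ∀ i, 0 ≤ φ x i) →
        (∀ x ∈ stdSimplex ℝ (Fin M), ∀ i, 0 < x i → φ x i = Γ x i / x i * h x) →
        IsRepFitness Γ φ) ∧
    (∀ φ : (Fin M → ℝ) → (Fin M → ℝ), IsRepFitness Γ φ →
        ∀ x ∈ stdSimplex ℝ (Fin M), ∀ i, 0 < x i →
          φ x i = Γ x i / x i * (∑ j, x j * φ x j)) := by
  constructor
  · intro h φ hpos hnn heq x hx
    have hsum : ∑ j, x j * φ x j = h x := by
      rw [← Finset.sum_filter_add_sum_filter_not Finset.univ (fun j => 0 < x j)]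
      have h1 : ∑ j ∈ Finset.univ.filter (fun j => 0 < x j), x j * φ x j
          = ∑ j ∈ Finset.univ.filter (fun j => 0 < x j), Γ x j * h x := by
        refine Finset.sum_congr rfl fun j hj => ?_
        have hj' : 0 < x j := (Finset.mem_filter.mp hj).2
        rw [heq x hx j hj']
        field_simp
      have h2 : ∑ j ∈ Finset.univ.filter (fun j => ¬ 0 < x j), x j * φ x j = 0 := by
        refine Finset.sum_eq_zero fun j hj => ?_
        have hj' : ¬ 0 < x j := (Finset.mem_filter.mp hj).2
        have : x j = 0 := le_antisymm (not_lt.mp hj') (hx.1 j)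
        rw [this, zero_mul]
      rw [h1, h2, ← Finset.sum_mul, hnm x hx, one_mul, add_zero]
    refine ⟨hnn x hx, ?_, ?_⟩
    · rw [hsum]; exact hpos x hx
    · intro i hi
      rw [hsum, heq x hx i hi]
      have h1 := hi.ne'
      have h2 := (hpos x hx).ne'
      field_simp
  · intro φ hφ x hx i hi
    obtain ⟨-, hS, hΓeq⟩ := hφ x hx
    rw [hΓeq i hi]
    field_simp
end

section
/- Let Γ : Δ_M → Δ_M be continuous with an asymptotically stable fixed point χ that attracts all orbits from a compact set K. Then for any neighborhood N of χ there exist η > 0 and T ∈ ℕ such that for all ε ∈ (0, η): every ε-chain x_0, x_1, …, x_T for Γ of length T with x_0 ∈ K satisfies x_T ∈ N. -/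
open Finset

/-- Uniform shadowing near an asymptotically stable equilibrium: for any
neighborhood `Nb` of `χ` there are `η > 0` and `T ∈ ℕ` such that for every
`ε ∈ (0, η)`, every `ε`-chain of length `T` for `Γ` starting in the compact set
`K` ends inside `Nb`. -/
theorem eps_chain_enters_neighborhood {M : ℕ}
    (Γ : (Fin M → ℝ) → (Fin M → ℝ))
    (hc : ContinuousOn Γ (stdSimplex ℝ (Fin M)))
    (hmap : ∀ x ∈ stdSimplex ℝ (Fin M), Γ x ∈ stdSimplex ℝ (Fin M))
    (χ : Fin M → ℝ) (hχ : χ ∈ stdSimplex ℝ (Fin M)) (hfix : Γ χ = χ)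
    (K : Set (Fin M → ℝ)) (hK : IsCompact K) (hKs : K ⊆ stdSimplex ℝ (Fin M))
    (hstab : ∀ Nb : Set (Fin M → ℝ), IsOpen Nb → χ ∈ Nb →
      ∃ U : Set (Fin M → ℝ), IsOpen U ∧ χ ∈ U ∧ U ∩ stdSimplex ℝ (Fin M) ⊆ Nb ∧
        ∀ x ∈ U ∩ stdSimplex ℝ (Fin M), Γ x ∈ U)
    (hattr : ∀ x ∈ K, ∀ Nb : Set (Fin M → ℝ), IsOpen Nb → χ ∈ Nb →
      ∃ T : ℕ, ∀ k ≥ T, Γ^[k] x ∈ Nb) :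
    ∀ Nb : Set (Fin M → ℝ), IsOpen Nb → χ ∈ Nb →
      ∃ η > (0 : ℝ), ∃ T : ℕ, ∀ ε : ℝ, 0 < ε → ε < η →
        ∀ c : ℕ → (Fin M → ℝ), c 0 ∈ K →
          (∀ i ≤ T, c i ∈ stdSimplex ℝ (Fin M)) →
          (∀ i < T, ‖Γ (c i) - c (i + 1)‖ < ε) → c T ∈ Nb := by
  intro Nb hNbo hχNb
  set Δ := stdSimplex ℝ (Fin M) with hΔdef
  have hΔc : IsCompact Δ := isCompact_stdSimplex _ _
  -- iterates stay in the simplex and are continuous there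
  have hiter_mem : ∀ n, ∀ x ∈ Δ, Γ^[n] x ∈ Δ := by
    intro n
    induction n with
    | zero => intro x hx; simpa using hx
    | succ n ih =>
      intro x hx
      rw [Function.iterate_succ_apply']
      exact hmap _ (ih x hx)
  have hiter_cont : ∀ n, ContinuousOn (Γ^[n]) Δ := by
    intro n
    induction n with
    | zero => simpa using continuousOn_id
    | succ n ih =>
      rw [Function.iterate_succ']
      exact hc.comp ih (fun x hx => hiter_mem n x hx)
  -- radius r with ball χ r ⊆ Nb
  obtain ⟨r, hr, hball⟩ := Metric.isOpen_iff.1 hNbo χ hχNb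
  set s := r / 2 with hsdef
  have hs : 0 < s := by positivity
  -- stability set for ball χ s
  obtain ⟨U, hUo, hχU, hUsub, hUinv⟩ :=
    hstab (Metric.ball χ s) Metric.isOpen_ball (Metric.mem_ball_self hs)
  -- U ∩ Δ is forward invariant
  have hUiter : ∀ n, ∀ x ∈ U ∩ Δ, Γ^[n] x ∈ U ∩ Δ := by
    intro n
    induction n with
    | zero => intro x hx; simpa using hx
    | succ n ih =>
      intro x hx
      rw [Function.iterate_succ_apply']
      exact ⟨hUinv _ (ih x hx), hmap _ (ih x hx).2⟩
  -- uniform entry time into U ∩ Δ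
  have hTex : ∃ T : ℕ, ∀ x ∈ K, Γ^[T] x ∈ U ∩ Δ := by
    have hx' : ∀ x ∈ K, ∃ Tx : ℕ, ∀ k ≥ Tx, Γ^[k] x ∈ U := fun x hx =>
      hattr x hx U hUo hχU
    choose! Tx hTx using hx'
    have hnbd : ∀ x ∈ K, ∃ O : Set (Fin M → ℝ),
        IsOpen O ∧ x ∈ O ∧ ∀ y ∈ O ∩ Δ, Γ^[Tx x] y ∈ U := by
      intro x hx
      have hxΔ : x ∈ Δ := hKs hx
      have h1 : Γ^[Tx x] x ∈ U := hTx x hx (Tx x) le_rfl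
      have h2 : Γ^[Tx x] ⁻¹' U ∈ nhdsWithin x Δ :=
        (hiter_cont (Tx x) x hxΔ).preimage_mem_nhdsWithin (hUo.mem_nhds h1)
      rw [mem_nhdsWithin] at h2
      obtain ⟨O, hOo, hxO, hsub⟩ := h2
      exact ⟨O, hOo, hxO, fun y hy => hsub hy⟩
    choose! O hOo hxO hOspec using hnbd
    obtain ⟨t, htK, hcover⟩ :=
      hK.elim_nhds_subcover O (fun x hx => (hOo x hx).mem_nhds (hxO x hx))
    refine ⟨t.sup Tx, ?_⟩
    intro x hx
    have := hcover hx
    simp only [Set.mem_iUnion] at this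
    obtain ⟨z, hz, hxOz⟩ := this
    have hzK : z ∈ K := htK z hz
    have hxΔ : x ∈ Δ := hKs hx
    have h1 : Γ^[Tx z] x ∈ U ∩ Δ :=
      ⟨hOspec z hzK x ⟨hxOz, hxΔ⟩, hiter_mem (Tx z) x hxΔ⟩
    have hle : Tx z ≤ t.sup Tx := Finset.le_sup hz
    have : Γ^[t.sup Tx] x = Γ^[t.sup Tx - Tx z] (Γ^[Tx z] x) := by
      rw [← Function.iterate_add_apply]
      congr 1
      omega
    rw [this]
    exact hUiter _ _ h1
  obtain ⟨T, hTspec⟩ := hTex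
  -- uniform continuity modulus
  have huc : UniformContinuousOn Γ Δ := hΔc.uniformContinuousOn_of_continuous hc
  rw [Metric.uniformContinuousOn_iff] at huc
  have huc' : ∀ γ : ℝ, ∃ δ : ℝ, 0 < γ →
      0 < δ ∧ ∀ x ∈ Δ, ∀ y ∈ Δ, dist x y < δ → dist (Γ x) (Γ y) < γ := by
    intro γ
    by_cases hγ : 0 < γ
    · obtain ⟨δ, hδ, hspec⟩ := huc γ hγ
      exact ⟨δ, fun _ => ⟨hδ, hspec⟩⟩
    · exact ⟨1, fun h => absurd h hγ⟩
  choose mod hmod using huc'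
  -- backward tolerance sequence
  set d : ℕ → ℝ := fun n => Nat.rec s (fun _ prev => min (mod (prev / 2)) (prev / 2)) n
    with hddef
  have hd0 : d 0 = s := rfl
  have hdsucc : ∀ j, d (j + 1) = min (mod (d j / 2)) (d j / 2) := fun j => rfl
  have hdpos : ∀ j, 0 < d j := by
    intro j
    induction j with
    | zero => exact hs
    | succ j ih =>
      rw [hdsucc]
      exact lt_min (hmod (d j / 2) (by positivity)).1 (by positivity)
  have hd_le : ∀ j, d (j + 1) ≤ d j / 2 := fun j => by
    rw [hdsucc]; exact min_le_right _ _
  have hd_anti : ∀ a b : ℕ, a ≤ b → d b ≤ d a := by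
    intro a b hab
    induction b with
    | zero => simp [Nat.le_zero.mp hab]
    | succ b ih =>
      rcases Nat.lt_or_ge a (b + 1) with h | h
      · calc d (b + 1) ≤ d b / 2 := hd_le b
          _ ≤ d b := by linarith [hdpos b]
          _ ≤ d a := ih (Nat.lt_succ_iff.mp h)
      · have : a = b + 1 := le_antisymm hab h
        simp [this]
  refine ⟨d T, hdpos T, T, ?_⟩
  intro ε hε hεη c hc0 hmem hstep
  have hc0Δ : c 0 ∈ Δ := hKs hc0
  -- shadowing induction
  have key : ∀ i, i ≤ T → dist (c i) (Γ^[i] (c 0)) < d (T - i) := by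
    intro i
    induction i with
    | zero => intro _; simpa using hdpos T
    | succ i ih =>
      intro hiT
      have hiT' : i ≤ T := Nat.le_of_succ_le hiT
      have hiltT : i < T := hiT
      have h1 := ih hiT'
      set j := T - (i + 1) with hjdef
      have hTi : T - i = j + 1 := by omega
      rw [hTi] at h1
      have hciΔ : c i ∈ Δ := hmem i hiT'
      have hgiΔ : Γ^[i] (c 0) ∈ Δ := hiter_mem i _ hc0Δ
      have hlt : dist (c i) (Γ^[i] (c 0)) < mod (d j / 2) :=
        lt_of_lt_of_le h1 (by rw [hdsucc]; exact min_le_left _ _)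
      have h2 : dist (Γ (c i)) (Γ (Γ^[i] (c 0))) < d j / 2 :=
        (hmod (d j / 2) (half_pos (hdpos j))).2 _ hciΔ _ hgiΔ hlt
      have h3 : dist (c (i + 1)) (Γ (c i)) < ε := by
        rw [dist_comm, dist_eq_norm]
        exact hstep i hiltT
      have hεd : ε < d j / 2 := by
        have h4 : d T ≤ d (j + 1) := hd_anti (j + 1) T (by omega)
        have h5 : d (j + 1) ≤ d j / 2 := hd_le j
        linarith
      have : dist (c (i + 1)) (Γ^[i + 1] (c 0)) ≤
          dist (c (i + 1)) (Γ (c i)) + dist (Γ (c i)) (Γ (Γ^[i] (c 0))) := by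
        rw [Function.iterate_succ_apply']
        exact dist_triangle _ _ _
      have hsum : dist (c (i + 1)) (Γ^[i + 1] (c 0)) < d j := by
        calc dist (c (i + 1)) (Γ^[i + 1] (c 0))
            ≤ dist (c (i + 1)) (Γ (c i)) + dist (Γ (c i)) (Γ (Γ^[i] (c 0))) := this
          _ < d j / 2 + d j / 2 := by linarith
          _ = d j := by ring
      simpa [hjdef] using hsum
  have hfinal := key T le_rfl
  simp only [Nat.sub_self] at hfinal
  rw [hd0] at hfinal
  have hUmem : Γ^[T] (c 0) ∈ U ∩ Δ := hTspec (c 0) hc0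
  have hdist : dist (Γ^[T] (c 0)) χ < s := hUsub hUmem
  apply hball
  have : dist (c T) χ ≤ dist (c T) (Γ^[T] (c 0)) + dist (Γ^[T] (c 0)) χ :=
    dist_triangle _ _ _
  have : dist (c T) χ < r := by
    rw [hsdef] at hfinal hdist
    linarith
  exact this
end

section
/- Let X_k be the Wright-Fisher chain and suppose x ∈ Δ_{M,N} is a recurrent state with x(j) > 0 for some j ∈ S_M. Then the vertex e_j is a recurrent state belonging to the same closed communication class as x. -/
/-!
Since `z` is recurrent and has a successor (some vertex `e_i` with `Γ_i(z/N) > 0`), the loop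
`z → ⋯ → z` gives a state `y` reachable from `z` with `P(y, z) > 0`. The multinomial weight of
`z` contains the factor `Γ_j(y) ^ z j` with `z j > 0`, so `Γ_j(y) > 0`, hence
`P(y, e_j) = Γ_j(y) ^ N > 0` and `e_j` is reachable from `z`, so it communicates with `z` and is
recurrent.
-/

open Finset

/-- The multinomial probability of producing count vector `w` (out of `N` trials)
with category probabilities `g`. -/
noncomputable def multinomialPMF {M : ℕ} (N : ℕ) (g : Fin M → ℝ) (w : Fin M → ℕ) : ℝ :=
  ((N.factorial : ℝ) / ∏ i, ((w i).factorial : ℝ)) * ∏ i, g i ^ w i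

/-- One-step transition probability of the Wright-Fisher chain between count
vectors `z, w`. -/
noncomputable def wfKernel {M : ℕ} (Γ : (Fin M → ℝ) → (Fin M → ℝ)) (N : ℕ)
    (z w : Fin M → ℕ) : ℝ :=
  multinomialPMF N (Γ fun i => (z i : ℝ) / N) w

/-- Accessibility: `w` can be reached from `z` in finitely many steps of the
Wright-Fisher chain, through valid states (count vectors summing to `N`). -/
def WFAccessible {M : ℕ} (Γ : (Fin M → ℝ) → (Fin M → ℝ)) (N : ℕ) :
    (Fin M → ℕ) → (Fin M → ℕ) → Prop :=
  Relation.ReflTransGen fun z w => (∑ i, w i = N) ∧ 0 < wfKernel Γ N z w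

/-- A state of a finite Markov chain is recurrent iff every state accessible
from it can access it back (standard characterization for finite chains). -/
def WFRecurrent {M : ℕ} (Γ : (Fin M → ℝ) → (Fin M → ℝ)) (N : ℕ)
    (z : Fin M → ℕ) : Prop :=
  ∀ w, WFAccessible Γ N z w → WFAccessible Γ N w z

namespace Relation

theorem exists_reflTransGen_rel_of_forall_reflTransGen_back {α : Type*} {r : α → α → Prop}
    {a b : α} (hback : ∀ c, ReflTransGen r a c → ReflTransGen r c a) (hab : r a b) :
    ∃ c, ReflTransGen r a c ∧ r c a :=
  TransGen.tail'_iff.mp (TransGen.head' hab (hback b (.single hab)))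

end Relation

theorem Finset.prod_apply_pi_single {ι β : Type*} [Fintype ι] [DecidableEq ι] [CommMonoid β]
    (f : ι → ℕ → β) (hf : ∀ i, f i 0 = 1) (j : ι) (n : ℕ) :
    ∏ i, f i ((Pi.single j n : ι → ℕ) i) = f j n :=
  (prod_eq_single j (fun i _ hij => by rw [Pi.single_eq_of_ne hij, hf]) (by simp)).trans
    (by rw [Pi.single_eq_same])

section stdSimplex

variable {𝕜 ι : Type*} [Field 𝕜] [LinearOrder 𝕜] [IsStrictOrderedRing 𝕜] [Fintype ι]

theorem exists_pos_of_mem_stdSimplex {x : ι → 𝕜} (hx : x ∈ stdSimplex 𝕜 ι) : ∃ i, 0 < x i := by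
  obtain ⟨i, -, hi⟩ := exists_ne_zero_of_sum_ne_zero (hx.2.symm ▸ one_ne_zero : ∑ i, x i ≠ 0)
  exact ⟨i, (hx.1 i).lt_of_ne' hi⟩

theorem div_mem_stdSimplex_of_sum_eq {N : ℕ} (hN : 0 < N) {u : ι → ℕ} (hu : ∑ i, u i = N) :
    (fun i => (u i : 𝕜) / N) ∈ stdSimplex 𝕜 ι := by
  refine ⟨fun i => by positivity, ?_⟩
  rw [← sum_div, ← Nat.cast_sum, hu, div_self (by positivity)]

end stdSimplex

section multinomial

variable {M N : ℕ} {g : Fin M → ℝ}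

theorem multinomialPMF_single (j : Fin M) : multinomialPMF N g (Pi.single j N) = g j ^ N := by
  rw [multinomialPMF, prod_apply_pi_single (fun _ n => (n.factorial : ℝ)) (by simp),
    prod_apply_pi_single (fun i n => g i ^ n) (by simp),
    div_self (Nat.cast_ne_zero.mpr N.factorial_ne_zero), one_mul]

theorem pos_of_multinomialPMF_pos {w : Fin M → ℕ} (hg : ∀ i, 0 ≤ g i)
    (hpos : 0 < multinomialPMF N g w) {j : Fin M} (hj : 0 < w j) : 0 < g j := by
  refine (hg j).lt_of_ne' fun hgj => hpos.ne' ?_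
  exact mul_eq_zero_of_right _ (prod_eq_zero (mem_univ j) (by rw [hgj, zero_pow hj.ne']))

end multinomial

section WrightFisher

variable {M N : ℕ} {Γ : (Fin M → ℝ) → (Fin M → ℝ)}

def WFStep (Γ : (Fin M → ℝ) → (Fin M → ℝ)) (N : ℕ) (z w : Fin M → ℕ) : Prop :=
  (∑ i, w i = N) ∧ 0 < wfKernel Γ N z w

theorem wfStep_single {z : Fin M → ℕ} {j : Fin M} (hj : 0 < Γ (fun i => (z i : ℝ) / N) j) :
    WFStep Γ N z (Pi.single j N) :=
  ⟨by simp, by rw [wfKernel, multinomialPMF_single]; exact pow_pos hj N⟩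

theorem exists_wfStep (hN : 0 < N)
    (hmap : ∀ x ∈ stdSimplex ℝ (Fin M), Γ x ∈ stdSimplex ℝ (Fin M))
    {z : Fin M → ℕ} (hz : ∑ i, z i = N) : ∃ w, WFStep Γ N z w :=
  let ⟨_, hj⟩ := exists_pos_of_mem_stdSimplex (hmap _ (div_mem_stdSimplex_of_sum_eq hN hz))
  ⟨_, wfStep_single hj⟩

theorem WFAccessible.sum_eq {z w : Fin M → ℕ} (h : WFAccessible Γ N z w)
    (hz : ∑ i, z i = N) : ∑ i, w i = N := by
  induction h with
  | refl => exact hz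
  | tail _ hstep _ => exact hstep.1

theorem WFRecurrent.of_accessible {z w : Fin M → ℕ} (hrec : WFRecurrent Γ N z)
    (hzw : WFAccessible Γ N z w) : WFRecurrent Γ N w :=
  fun v hwv => (hrec v (hzw.trans hwv)).trans hzw

end WrightFisher

theorem recurrent_state_communicates_with_vertex_general {M N : ℕ}
    (Γ : (Fin M → ℝ) → (Fin M → ℝ))
    (hmap : ∀ x ∈ stdSimplex ℝ (Fin M), Γ x ∈ stdSimplex ℝ (Fin M))
    (z : Fin M → ℕ) (hz : ∑ i, z i = N)
    (hrec : WFRecurrent Γ N z) (j : Fin M) (hj : 0 < z j) :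
    WFRecurrent Γ N (Pi.single j N) ∧
      WFAccessible Γ N z (Pi.single j N) ∧
      WFAccessible Γ N (Pi.single j N) z := by
  have hN : 0 < N := hz ▸ hj.trans_le (single_le_sum (by simp) (mem_univ j))
  obtain ⟨w, hzw⟩ := exists_wfStep hN hmap hz
  obtain ⟨y, hzy, hyz⟩ : ∃ y, WFAccessible Γ N z y ∧ WFStep Γ N y z :=
    Relation.exists_reflTransGen_rel_of_forall_reflTransGen_back hrec hzw
  have hΓy := hmap _ (div_mem_stdSimplex_of_sum_eq hN (hzy.sum_eq hz))
  have hze : WFAccessible Γ N z (Pi.single j N) :=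
    hzy.tail (wfStep_single (pos_of_multinomialPMF_pos hΓy.1 hyz.2 hj))
  exact ⟨hrec.of_accessible hze, hze, hrec _ hze⟩

/-- If `z` is a recurrent state of the Wright-Fisher chain with `z j > 0`, then
the vertex `e_j` (counts `N·e_j`) is recurrent and belongs to the same closed
communication class as `z`. -/
theorem recurrent_state_communicates_with_vertex {M N : ℕ} (hN : 0 < N)
    (Γ : (Fin M → ℝ) → (Fin M → ℝ))
    (hmap : ∀ x ∈ stdSimplex ℝ (Fin M), Γ x ∈ stdSimplex ℝ (Fin M))
    (z : Fin M → ℕ) (hz : ∑ i, z i = N)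
    (hrec : WFRecurrent Γ N z) (j : Fin M) (hj : 0 < z j) :
    WFRecurrent Γ N (Pi.single j N) ∧
      WFAccessible Γ N z (Pi.single j N) ∧
      WFAccessible Γ N (Pi.single j N) z :=
  recurrent_state_communicates_with_vertex_general Γ hmap z hz hrec j hj
end
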